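/- arXiv:1709.03889 — 3 statements merged into one kernel-verified Lean document; each statement's English description precedes it below -/
import Mathlib

section
/- Let X → Y → Z → X[1] be an Auslander-Reiten triangle with Z not isomorphic to Z[1], and let W be indecomposable. Then dim Hom(W,X) + dim Hom(W,Z) − dim Hom(W,Y) equals 1 if W ≅ Z or W ≅ Z[−1], and equals 0 otherwise. -/
open CategoryTheory Limits Pretriangulated Module
open scoped Classical

noncomputable section

variable {k : Type} [Field k] [IsAlgClosed k]
variable {C : Type} [Category C] [Preadditive C] [CategoryTheory.Linear k C]
  [HasZeroObject C] [HasBinaryBiproducts C] [HasFiniteBiproducts C]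
  [HasShift C ℤ] [∀ n : ℤ, (CategoryTheory.shiftFunctor C n).Additive]
  [Pretriangulated C]
  [∀ X Y : C, FiniteDimensional k (X ⟶ Y)]

/-- An object is indecomposable if it is nonzero and admits no nontrivial
direct sum decomposition. -/
def Indec (W : C) : Prop :=
  ¬ IsZero W ∧ ∀ A B : C, Nonempty (W ≅ A ⊞ B) → IsZero A ∨ IsZero B

/-- The Krull-Schmidt property: indecomposables have local endomorphism rings
and every object is a finite direct sum of indecomposables. -/
def KrullSchmidt : Prop :=
  (∀ W : C, Indec W → ∀ f : W ⟶ W, IsIso f ∨ IsIso (𝟙 W - f)) ∧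
  (∀ X : C, ∃ (n : ℕ) (f : Fin n → C), (∀ i, Indec (f i)) ∧ Nonempty (X ≅ ⨁ f))

/-- An Auslander-Reiten triangle: a distinguished triangle with indecomposable
end terms, nonzero connecting map, such that every non-split-epi to the third
object factors through the middle (equivalently every non-split-mono out of the
first object factors through the middle). -/
def IsARTriangle (T : Triangle C) : Prop :=
  (T ∈ distTriang C) ∧ Indec T.obj₁ ∧ Indec T.obj₃ ∧ T.mor₃ ≠ 0 ∧
  (∀ (W : C) (f : W ⟶ T.obj₃), (¬ ∃ s : T.obj₃ ⟶ W, s ≫ f = 𝟙 T.obj₃) →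
    ∃ g : W ⟶ T.obj₂, g ≫ T.mor₂ = f) ∧
  (∀ (W : C) (f : T.obj₁ ⟶ W), (¬ ∃ s : W ⟶ T.obj₁, f ≫ s = 𝟙 T.obj₁) →
    ∃ g : T.obj₂ ⟶ W, T.mor₁ ≫ g = f)


/-!
Applying `Hom(W, -)` to the rotations of the triangle gives the long exact sequence
`Hom(W, Z[-1]) → Hom(W, X) → Hom(W, Y) → Hom(W, Z) → Hom(W, X[1])`, so by rank–nullity the
alternating sum equals the sum of the ranks of the two outer maps, composition with
`δ : Z → X[1]` and with `δ' : Z[-1] → X`. Both kill every non-split epimorphism into their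
(indecomposable) source, and for such a nonzero morphism `δ : A → B` the image of
`Hom(W, A) → Hom(W, B)` is zero unless `W ≅ A`, when it is spanned by one map: an endomorphism
`u` of `A` has an eigenvalue `a`, and `u - a` is not invertible, hence not split epi, so
`u ≫ δ = a • δ`. The hypothesis `Z ≇ Z[1]` makes the two cases exclusive.
-/

section Generalities

variable {D : Type*} [Category D]

def HasLocalEnd [Preadditive D] (A : D) : Prop :=
  ∀ f : A ⟶ A, IsIso f ∨ IsIso (𝟙 A - f)

def KillsNonSplitEpis [HasZeroMorphisms D] {A B : D} (δ : A ⟶ B) : Prop :=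
  ∀ (V : D) (u : V ⟶ A), (¬ ∃ s : A ⟶ V, s ≫ u = 𝟙 A) → u ≫ δ = 0

lemma HasLocalEnd.map {E : Type*} [Category E] [Preadditive D] [Preadditive E]
    (F : D ⥤ E) [F.Full] [F.Additive] {A : D} (hA : HasLocalEnd A) :
    HasLocalEnd (F.obj A) := by
  intro f
  rw [← F.map_preimage f]
  rcases hA (F.preimage f) with h | h
  · exact Or.inl inferInstance
  · right
    rw [← F.map_id, ← F.map_sub]
    infer_instance

lemma KillsNonSplitEpis.map {E : Type*} [Category E] [HasZeroMorphisms D] [HasZeroMorphisms E]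
    (F : D ⥤ E) [F.Full] [F.EssSurj] [F.PreservesZeroMorphisms] {A B : D} {δ : A ⟶ B}
    (hδ : KillsNonSplitEpis δ) : KillsNonSplitEpis (F.map δ) := by
  intro V u hu
  let e := F.objObjPreimageIso V
  have hsplit : ¬ ∃ s, s ≫ F.preimage (e.hom ≫ u) = 𝟙 A := by
    rintro ⟨s, hs⟩
    refine hu ⟨F.map s ≫ e.hom, ?_⟩
    rw [Category.assoc, ← F.map_preimage (e.hom ≫ u), ← F.map_comp, hs, F.map_id]
  rw [← cancel_epi e.hom, comp_zero, ← Category.assoc, ← F.map_preimage (e.hom ≫ u),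
    ← F.map_comp, hδ _ _ hsplit, F.map_zero]

lemma KillsNonSplitEpis.comp [Preadditive D] {A B B' : D} {δ : A ⟶ B}
    (hδ : KillsNonSplitEpis δ) (g : B ⟶ B') : KillsNonSplitEpis (δ ≫ g) := by
  intro V u hu
  rw [← Category.assoc, hδ V u hu, zero_comp]

lemma KillsNonSplitEpis.neg [Preadditive D] {A B : D} {δ : A ⟶ B}
    (hδ : KillsNonSplitEpis δ) : KillsNonSplitEpis (-δ) := by
  intro V u hu
  rw [Preadditive.comp_neg, hδ V u hu, neg_zero]

lemma HasLocalEnd.isIso_of_comp_eq_id [Preadditive D] {W Z : D} (hW : HasLocalEnd W)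
    (hZ : ¬ IsZero Z) (f : W ⟶ Z) (s : Z ⟶ W) (hs : s ≫ f = 𝟙 Z) : IsIso f := by
  rcases hW (f ≫ s) with h | h
  · have : IsSplitMono f :=
      IsSplitMono.mk' ⟨s ≫ inv (f ≫ s), by rw [← Category.assoc, IsIso.hom_inv_id]⟩
    have : IsSplitEpi f := IsSplitEpi.mk' ⟨s, hs⟩
    exact isIso_of_epi_of_isSplitMono f
  · have hf : (𝟙 W - f ≫ s) ≫ f = (𝟙 W - f ≫ s) ≫ 0 := by
      simp [Preadditive.sub_comp, hs]
    rw [cancel_epi] at hf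
    exact absurd (by rw [IsZero.iff_id_eq_zero, ← hs, hf, comp_zero]) hZ

end Generalities

section Linear

variable {D : Type*} [Category D] [Preadditive D] [Linear k D]
  [∀ X Y : D, FiniteDimensional k (X ⟶ Y)]

lemma exists_not_isIso_sub_smul_id {A : D} (hA : ¬ IsZero A) (u : A ⟶ A) :
    ∃ a : k, ¬ IsIso (u - a • 𝟙 A) := by
  have : Nontrivial (End A) :=
    nontrivial_of_ne (𝟙 A) 0 fun h => hA ((IsZero.iff_id_eq_zero A).mpr h)
  have : FiniteDimensional k (End A) := inferInstanceAs (FiniteDimensional k (A ⟶ A))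
  obtain ⟨a, ha⟩ := spectrum.nonempty_of_isAlgClosed_of_finiteDimensional k (End.of u)
  refine ⟨a, ?_⟩
  rwa [spectrum.mem_iff, IsUnit.sub_iff, isUnit_iff_isIso, Algebra.algebraMap_eq_smul_one] at ha

variable {A B : D} {δ : A ⟶ B}

lemma KillsNonSplitEpis.exists_comp_eq_smul (hδ : KillsNonSplitEpis δ) (hδ₀ : δ ≠ 0)
    (hA : HasLocalEnd A) (u : A ⟶ A) : ∃ a : k, u ≫ δ = a • δ := by
  have hA₀ : ¬ IsZero A := fun h => hδ₀ (h.eq_of_src _ _)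
  obtain ⟨a, ha⟩ := exists_not_isIso_sub_smul_id (k := k) hA₀ u
  refine ⟨a, ?_⟩
  have hsplit : ¬ ∃ s, s ≫ (u - a • 𝟙 A) = 𝟙 A :=
    fun ⟨s, hs⟩ => ha (hA.isIso_of_comp_eq_id hA₀ _ s hs)
  simpa [Preadditive.sub_comp, sub_eq_zero] using hδ A _ hsplit

lemma KillsNonSplitEpis.range_rightComp_eq_span (hδ : KillsNonSplitEpis δ) (hδ₀ : δ ≠ 0)
    (hA : HasLocalEnd A) {W : D} (φ : W ≅ A) :
    LinearMap.range (Linear.rightComp k W δ) = Submodule.span k {φ.hom ≫ δ} := by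
  refine le_antisymm ?_ (by simp [Submodule.span_le])
  rintro _ ⟨f, rfl⟩
  obtain ⟨a, ha⟩ := hδ.exists_comp_eq_smul (k := k) hδ₀ hA (φ.inv ≫ f)
  have hf : f ≫ δ = a • (φ.hom ≫ δ) := by
    rw [← Linear.comp_smul, ← ha, Category.assoc, φ.hom_inv_id_assoc]
  rw [Linear.rightComp_apply, hf]
  exact Submodule.smul_mem _ _ (Submodule.mem_span_singleton_self _)

lemma KillsNonSplitEpis.finrank_range_rightComp (hδ : KillsNonSplitEpis δ) (hδ₀ : δ ≠ 0)
    (hA : HasLocalEnd A) {W : D} (hW : HasLocalEnd W) :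
    finrank k (LinearMap.range (Linear.rightComp k W δ)) = if Nonempty (W ≅ A) then 1 else 0 := by
  split_ifs with hWA
  · obtain ⟨φ⟩ := hWA
    have hφδ : φ.hom ≫ δ ≠ 0 := by
      rwa [Ne, Preadditive.IsIso.comp_left_eq_zero]
    rw [hδ.range_rightComp_eq_span hδ₀ hA φ, finrank_span_singleton hφδ]
  · have hA₀ : ¬ IsZero A := fun h => hδ₀ (h.eq_of_src _ _)
    suffices Linear.rightComp k W δ = 0 by rw [this, LinearMap.range_zero, finrank_bot]
    ext f
    refine hδ W f fun ⟨s, hs⟩ => hWA ?_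
    have := hW.isIso_of_comp_eq_id hA₀ f s hs
    exact ⟨asIso f⟩

end Linear

section Shift

variable {D : Type*} [Category D] [Preadditive D] [HasShift D ℤ]
  [∀ n : ℤ, (shiftFunctor D n).Additive]

lemma Triangle.invRotate_mor₁_ne_zero {T : Triangle D} (h : T.mor₃ ≠ 0) :
    T.invRotate.mor₁ ≠ 0 := by
  intro h0
  have h1 : T.mor₃⟦(-1 : ℤ)⟧' ≫ (shiftFunctorCompIsoId D (1 : ℤ) (-1) (by norm_num)).hom.app _
      = 0 := neg_eq_zero.1 h0
  rw [Preadditive.IsIso.comp_right_eq_zero, Functor.map_eq_zero_iff] at h1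
  exact h h1

lemma KillsNonSplitEpis.invRotate_mor₁ {T : Triangle D} (h : KillsNonSplitEpis T.mor₃) :
    KillsNonSplitEpis T.invRotate.mor₁ :=
  ((h.map (shiftFunctor D (-1 : ℤ))).comp _).neg

end Shift

section Triangulated

variable {D : Type*} [Category D] [Preadditive D] [HasZeroObject D] [HasShift D ℤ]
  [∀ n : ℤ, (shiftFunctor D n).Additive] [Pretriangulated D]
  {K : Type*} [Field K] [Linear K D]

lemma ker_rightComp_mor₂ {T : Triangle D} (hT : T ∈ distTriang D) (W : D) :
    LinearMap.ker (Linear.rightComp K W T.mor₂) =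
      LinearMap.range (Linear.rightComp K W T.mor₁) := by
  ext f
  simp only [LinearMap.mem_ker, LinearMap.mem_range, Linear.rightComp_apply]
  constructor
  · intro hf
    obtain ⟨g, rfl⟩ := Triangle.coyoneda_exact₂ T hT f hf
    exact ⟨g, rfl⟩
  · rintro ⟨g, rfl⟩
    rw [Category.assoc, comp_distTriang_mor_zero₁₂ T hT, comp_zero]

lemma finrank_hom_obj₂ [∀ X Y : D, FiniteDimensional K (X ⟶ Y)] {T : Triangle D}
    (hT : T ∈ distTriang D) (W : D) :
    finrank K (W ⟶ T.obj₂) = finrank K (LinearMap.range (Linear.rightComp K W T.mor₂)) +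
      finrank K (LinearMap.range (Linear.rightComp K W T.mor₁)) := by
  rw [← LinearMap.finrank_range_add_finrank_ker (Linear.rightComp K W T.mor₂),
    ker_rightComp_mor₂ hT]

end Triangulated

lemma not_nonempty_iso_shift_neg_one {D : Type*} [Category D] [HasShift D ℤ] {Z W : D}
    (hZ : ¬ Nonempty (Z ≅ Z⟦(1 : ℤ)⟧)) (φ : W ≅ Z) : ¬ Nonempty (W ≅ Z⟦(-1 : ℤ)⟧) := by
  rintro ⟨ψ⟩
  exact hZ ⟨((shiftFunctor D (1 : ℤ)).mapIso (φ.symm ≪≫ ψ) ≪≫ shiftNegShift Z 1).symm⟩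

lemma IsARTriangle.killsNonSplitEpis_mor₃ {T : Triangle C} (hT : IsARTriangle T) :
    KillsNonSplitEpis T.mor₃ := by
  intro V u hu
  obtain ⟨g, rfl⟩ := hT.2.2.2.2.1 V u hu
  rw [Category.assoc, comp_distTriang_mor_zero₂₃ T hT.1, comp_zero]

theorem stmt3 (hKS : KrullSchmidt (C := C))
    (T : Triangle C) (hT : IsARTriangle T)
    (hZ : ¬ Nonempty (T.obj₃ ≅ T.obj₃⟦(1 : ℤ)⟧))
    (W : C) (hW : Indec W) :
    (finrank k (W ⟶ T.obj₁) : ℤ) + finrank k (W ⟶ T.obj₃) - finrank k (W ⟶ T.obj₂) =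
      if Nonempty (W ≅ T.obj₃) ∨ Nonempty (W ≅ T.obj₃⟦(-1 : ℤ)⟧) then 1 else 0 := by
  have hδ := hT.killsNonSplitEpis_mor₃
  obtain ⟨hdist, -, hZind, hδ₀, -, -⟩ := hT
  have hZloc : HasLocalEnd T.obj₃ := hKS.1 _ hZind
  have hWloc : HasLocalEnd W := hKS.1 W hW
  -- `X` and `Z` are the middle terms of the inverse rotation and the rotation of `T`.
  have hdimX : finrank k (W ⟶ T.obj₁) =
      finrank k (LinearMap.range (Linear.rightComp k W T.mor₁)) +
        finrank k (LinearMap.range (Linear.rightComp k W T.invRotate.mor₁)) :=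
    finrank_hom_obj₂ (inv_rot_of_distTriang T hdist) W
  have hdimZ : finrank k (W ⟶ T.obj₃) =
      finrank k (LinearMap.range (Linear.rightComp k W T.mor₃)) +
        finrank k (LinearMap.range (Linear.rightComp k W T.mor₂)) :=
    finrank_hom_obj₂ (rot_of_distTriang T hdist) W
  rw [hdimX, hdimZ, finrank_hom_obj₂ hdist, hδ.finrank_range_rightComp hδ₀ hZloc hWloc,
    hδ.invRotate_mor₁.finrank_range_rightComp (Triangle.invRotate_mor₁_ne_zero hδ₀)
      (hZloc.map (shiftFunctor C (-1 : ℤ))) hWloc]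
  have hexcl : Nonempty (W ≅ T.obj₃) → ¬ Nonempty (W ≅ T.obj₃⟦(-1 : ℤ)⟧) :=
    fun ⟨φ⟩ => not_nonempty_iso_shift_neg_one hZ φ
  split_ifs <;> first | tauto | (push_cast; ring)
end
end

section
/- Let X → Y → Z → X[1] be an Auslander-Reiten triangle with Z ≅ Z[1], and let W be indecomposable. Then dim Hom(W,X) + dim Hom(W,Z) − dim Hom(W,Y) equals 2 if W ≅ Z and 0 otherwise. -/
open CategoryTheory Limits Pretriangulated Module
open scoped Classical

noncomputable section

variable {k : Type} [Field k] [IsAlgClosed k]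
variable {C : Type} [Category C] [Preadditive C] [CategoryTheory.Linear k C]
  [HasZeroObject C] [HasBinaryBiproducts C] [HasFiniteBiproducts C]
  [HasShift C ℤ] [∀ n : ℤ, (CategoryTheory.shiftFunctor C n).Additive]
  [Pretriangulated C]
  [∀ X Y : C, FiniteDimensional k (X ⟶ Y)]

/-
Applying `Hom(W, -)` to the triangle and its rotations gives an exact sequence
`Hom(W, Z⟦-1⟧) → Hom(W, X) → Hom(W, Y) → Hom(W, Z) → Hom(W, X⟦1⟧)`, so
`dim Hom(W, X) - dim Hom(W, Y) + dim Hom(W, Z)` is the sum of the ranks of the two outer maps.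
By the Auslander-Reiten property, composing with `Z ⟶ X⟦1⟧` kills exactly the non-split
epimorphisms into `Z`, and after shifting the same holds for `Z⟦-1⟧ ⟶ X`. As `End W` is local and
finite-dimensional over an algebraically closed field, a split epimorphism out of `W` is an
isomorphism, and when `W ≅ Z` every `W ⟶ Z` is a multiple of a fixed isomorphism modulo
non-isomorphisms. So each outer rank is `1` or `0` according as `W ≅ Z` (using `Z⟦-1⟧ ≅ Z`).
-/

section

variable {D : Type*} [Category D]

lemma isSplitEpi_iso_comp_iff {V V' Z : D} (e : V ⟶ V') [IsIso e] (g : V' ⟶ Z) :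
    IsSplitEpi (e ≫ g) ↔ IsSplitEpi g :=
  ⟨fun _ => IsSplitEpi.mk' ⟨section_ (e ≫ g) ≫ e, by simp⟩, fun _ => inferInstance⟩

section HasZeroMorphisms

variable [HasZeroMorphisms D]

def VanishesExactlyOnNonSplitEpis {Z X : D} (m : Z ⟶ X) : Prop :=
  ∀ ⦃V : D⦄ (g : V ⟶ Z), g ≫ m = 0 ↔ ¬ IsSplitEpi g

namespace VanishesExactlyOnNonSplitEpis

variable {Z X : D} {m : Z ⟶ X}

lemma ne_zero (hm : VanishesExactlyOnNonSplitEpis m) : m ≠ 0 :=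
  fun h => (hm (𝟙 Z)).1 (by simp [h]) inferInstance

lemma not_isZero (hm : VanishesExactlyOnNonSplitEpis m) : ¬ IsZero Z :=
  fun hZ => hm.ne_zero (hZ.eq_of_src _ _)

lemma comp_mono (hm : VanishesExactlyOnNonSplitEpis m) {X' : D} (u : X ⟶ X') [Mono u] :
    VanishesExactlyOnNonSplitEpis (m ≫ u) := fun V g => by
  rw [← hm g, ← Category.assoc, ← cancel_mono u, zero_comp]

lemma map {D' : Type*} [Category D'] [HasZeroMorphisms D'] (F : D ⥤ D') [F.IsEquivalence]
    [F.PreservesZeroMorphisms] (hm : VanishesExactlyOnNonSplitEpis m) :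
    VanishesExactlyOnNonSplitEpis (F.map m) := fun V g => by
  let e := F.objObjPreimageIso V
  have hg : F.map (F.preimage (e.hom ≫ g)) = e.hom ≫ g := F.map_preimage _
  calc g ≫ F.map m = 0 ↔ e.hom ≫ g ≫ F.map m = e.hom ≫ 0 := (cancel_epi e.hom).symm
    _ ↔ F.preimage (e.hom ≫ g) ≫ m = 0 := by
      rw [comp_zero, ← Category.assoc, ← hg, ← F.map_comp, F.map_eq_zero_iff, F.preimage_map]
    _ ↔ ¬ IsSplitEpi g := by
      rw [hm, ← F.isSplitEpi_iff, hg, isSplitEpi_iso_comp_iff]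

end VanishesExactlyOnNonSplitEpis

end HasZeroMorphisms

section Preadditive

variable [Preadditive D]

lemma VanishesExactlyOnNonSplitEpis.neg {Z X : D} {m : Z ⟶ X}
    (hm : VanishesExactlyOnNonSplitEpis m) : VanishesExactlyOnNonSplitEpis (-m) := fun V g => by
  rw [Preadditive.comp_neg, neg_eq_zero, hm g]

lemma isIso_of_isSplitEpi_of_localEnd {W Z : D} (hW : ∀ f : W ⟶ W, IsIso f ∨ IsIso (𝟙 W - f))
    (hZ : ¬ IsZero Z) (g : W ⟶ Z) [IsSplitEpi g] : IsIso g := by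
  rcases hW (g ≫ section_ g) with hiso | hiso
  · have : IsSplitMono g := IsSplitMono.mk'
      ⟨section_ g ≫ inv (g ≫ section_ g), by rw [← Category.assoc, IsIso.hom_inv_id]⟩
    exact isIso_of_mono_of_isSplitEpi g
  · have hzero : g ≫ section_ g = 0 := by
      rw [← Preadditive.IsIso.comp_right_eq_zero _ (𝟙 W - g ≫ section_ g)]
      simp [Preadditive.comp_sub]
    refine absurd ((IsZero.iff_id_eq_zero Z).2 ?_) hZ
    rw [← IsSplitEpi.id g, ← cancel_epi g, reassoc_of% hzero, zero_comp, comp_zero]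

variable {𝕜 : Type*} [Field 𝕜] [IsAlgClosed 𝕜] [Linear 𝕜 D]

lemma exists_not_isIso_sub_smul_id_s4 {W : D} [FiniteDimensional 𝕜 (W ⟶ W)] (hW : ¬ IsZero W)
    (f : W ⟶ W) : ∃ c : 𝕜, ¬ IsIso (f - c • 𝟙 W) := by
  have : Nontrivial (End W) := ⟨⟨𝟙 W, 0, fun h => hW ((IsZero.iff_id_eq_zero W).2 h)⟩⟩
  have : FiniteDimensional 𝕜 (End W) := ‹FiniteDimensional 𝕜 (W ⟶ W)›
  obtain ⟨c, hc⟩ := spectrum.nonempty_of_isAlgClosed_of_finiteDimensional 𝕜 (End.of f)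
  rw [spectrum.mem_iff, ← IsUnit.neg_iff, neg_sub, isUnit_iff_isIso,
    Algebra.algebraMap_eq_smul_one] at hc
  exact ⟨c, hc⟩

theorem VanishesExactlyOnNonSplitEpis.finrank_range_rightComp {Z X : D} {m : Z ⟶ X}
    (hm : VanishesExactlyOnNonSplitEpis m) {W : D} [FiniteDimensional 𝕜 (W ⟶ W)]
    (hW : ∀ f : W ⟶ W, IsIso f ∨ IsIso (𝟙 W - f)) :
    finrank 𝕜 (LinearMap.range (Linear.rightComp 𝕜 W m)) = if Nonempty (W ≅ Z) then 1 else 0 := by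
  split_ifs with hWZ
  · obtain ⟨φ⟩ := hWZ
    have hspan : LinearMap.range (Linear.rightComp 𝕜 W m) = 𝕜 ∙ (φ.hom ≫ m) := by
      ext x
      simp only [LinearMap.mem_range, Linear.rightComp_apply, Submodule.mem_span_singleton]
      constructor
      · rintro ⟨g, rfl⟩
        obtain ⟨c, hc⟩ := exists_not_isIso_sub_smul_id_s4 (𝕜 := 𝕜)
          (fun hW0 => hm.not_isZero (hW0.of_iso φ.symm)) (g ≫ φ.inv)
        have hsplit : ¬ IsSplitEpi (g - c • φ.hom) := fun _ => hc <| by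
          have := isIso_of_isSplitEpi_of_localEnd hW hm.not_isZero (g - c • φ.hom)
          simpa [Preadditive.sub_comp] using (inferInstance : IsIso ((g - c • φ.hom) ≫ φ.inv))
        refine ⟨c, (sub_eq_zero.1 ?_).symm⟩
        rw [← Linear.smul_comp, ← Preadditive.sub_comp]
        exact (hm _).2 hsplit
      · rintro ⟨c, rfl⟩
        exact ⟨c • φ.hom, Linear.smul_comp _ _ _ _ _ _⟩
    rw [hspan, finrank_span_singleton fun h => (hm φ.hom).1 h inferInstance]
  · have hzero : Linear.rightComp 𝕜 W m = 0 := LinearMap.ext fun g => (hm g).2 fun _ =>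
      haveI := isIso_of_isSplitEpi_of_localEnd hW hm.not_isZero g
      hWZ ⟨asIso g⟩
    rw [hzero, LinearMap.range_zero, finrank_bot]

end Preadditive

end

lemma Function.Exact.finrank_range_add_finrank_range {K V₀ V₁ V₂ : Type*} [DivisionRing K]
    [AddCommGroup V₀] [Module K V₀] [AddCommGroup V₁] [Module K V₁] [AddCommGroup V₂] [Module K V₂]
    [FiniteDimensional K V₁] {f : V₀ →ₗ[K] V₁} {g : V₁ →ₗ[K] V₂} (h : Function.Exact f g) :
    finrank K (LinearMap.range f) + finrank K (LinearMap.range g) = finrank K V₁ := by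
  rw [← h.linearMap_ker_eq, add_comm]
  exact g.finrank_range_add_finrank_ker

lemma finrank_sub_finrank_add_finrank_of_exact {K V₀ V₁ V₂ V₃ V₄ : Type*} [DivisionRing K]
    [AddCommGroup V₀] [Module K V₀] [AddCommGroup V₁] [Module K V₁] [AddCommGroup V₂] [Module K V₂]
    [AddCommGroup V₃] [Module K V₃] [AddCommGroup V₄] [Module K V₄]
    [FiniteDimensional K V₁] [FiniteDimensional K V₂] [FiniteDimensional K V₃]
    {f₀ : V₀ →ₗ[K] V₁} {f₁ : V₁ →ₗ[K] V₂} {f₂ : V₂ →ₗ[K] V₃} {f₃ : V₃ →ₗ[K] V₄}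
    (h₁ : Function.Exact f₀ f₁) (h₂ : Function.Exact f₁ f₂) (h₃ : Function.Exact f₂ f₃) :
    (finrank K V₁ : ℤ) - finrank K V₂ + finrank K V₃ =
      finrank K (LinearMap.range f₀) + finrank K (LinearMap.range f₃) := by
  have e₁ := h₁.finrank_range_add_finrank_range
  have e₂ := h₂.finrank_range_add_finrank_range
  have e₃ := h₃.finrank_range_add_finrank_range
  omega

lemma CategoryTheory.Pretriangulated.Triangle.exact_rightComp_mor₁_rightComp_mor₂ {R D : Type*}
    [Semiring R] [Category D] [Preadditive D] [Linear R D] [HasZeroObject D] [HasShift D ℤ]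
    [∀ n : ℤ, (CategoryTheory.shiftFunctor D n).Additive] [Pretriangulated D]
    (T : Triangle D) (hT : T ∈ distTriang D) (W : D) :
    Function.Exact (Linear.rightComp R W T.mor₁) (Linear.rightComp R W T.mor₂) :=
  fun g => ⟨fun hg => (T.coyoneda_exact₂ hT g hg).imp fun _ h => h.symm,
    by rintro ⟨f, rfl⟩; simp [comp_distTriang_mor_zero₁₂ T hT]⟩

omit [HasFiniteBiproducts C] in
lemma IsARTriangle.vanishesExactlyOnNonSplitEpis_mor₃ {T : Triangle C} (hT : IsARTriangle T) :
    VanishesExactlyOnNonSplitEpis T.mor₃ := by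
  obtain ⟨hdist, -, -, hmor₃, hfac, -⟩ := hT
  refine fun V g => ⟨fun hg _ => hmor₃ ?_, fun hg => ?_⟩
  · rw [← Category.id_comp T.mor₃, ← IsSplitEpi.id g, Category.assoc, hg, comp_zero]
  · obtain ⟨f, rfl⟩ := hfac V g fun ⟨s, hs⟩ => hg (IsSplitEpi.mk' ⟨s, hs⟩)
    simp [comp_distTriang_mor_zero₂₃ T hdist]

omit [HasFiniteBiproducts C] in
lemma IsARTriangle.vanishesExactlyOnNonSplitEpis_invRotate_mor₁ {T : Triangle C}
    (hT : IsARTriangle T) : VanishesExactlyOnNonSplitEpis T.invRotate.mor₁ := by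
  rw [Triangle.invRotate_mor₁]
  exact ((hT.vanishesExactlyOnNonSplitEpis_mor₃.map (shiftFunctor C (-1 : ℤ))).comp_mono
    ((shiftFunctorCompIsoId C (1 : ℤ) (-1) (by omega)).app T.obj₁).hom).neg

theorem stmt4 (hKS : KrullSchmidt (C := C))
    (T : Triangle C) (hT : IsARTriangle T)
    (hZ : Nonempty (T.obj₃ ≅ T.obj₃⟦(1 : ℤ)⟧))
    (W : C) (hW : Indec W) :
    (finrank k (W ⟶ T.obj₁) : ℤ) + finrank k (W ⟶ T.obj₃) - finrank k (W ⟶ T.obj₂) =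
      if Nonempty (W ≅ T.obj₃) then 2 else 0 := by
  obtain ⟨e⟩ := hZ
  have hloc := hKS.1 W hW
  have hγ := hT.vanishesExactlyOnNonSplitEpis_mor₃.finrank_range_rightComp (𝕜 := k) hloc
  have hδ := hT.vanishesExactlyOnNonSplitEpis_invRotate_mor₁.finrank_range_rightComp (𝕜 := k) hloc
  let ζ : T.invRotate.obj₁ ≅ T.obj₃ := (shiftFunctor C (-1 : ℤ)).mapIso e ≪≫ shiftShiftNeg _ _
  rw [(Iso.isoCongrRight ζ).nonempty_congr] at hδ
  have hdist := hT.1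
  have hcount : (finrank k (W ⟶ T.obj₁) : ℤ) - finrank k (W ⟶ T.obj₂) + finrank k (W ⟶ T.obj₃) =
      finrank k (LinearMap.range (Linear.rightComp k W T.invRotate.mor₁)) +
        finrank k (LinearMap.range (Linear.rightComp k W T.mor₃)) :=
    finrank_sub_finrank_add_finrank_of_exact
      (T.invRotate.exact_rightComp_mor₁_rightComp_mor₂ (inv_rot_of_distTriang T hdist) W)
      (T.exact_rightComp_mor₁_rightComp_mor₂ hdist W)
      (T.rotate.exact_rightComp_mor₁_rightComp_mor₂ (rot_of_distTriang T hdist) W)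
  split_ifs at * <;> omega
end
end

section
/- Let c ∈ Q(t) and define g_n ∈ Q(t) by g_0 = c, g_1 = t^{-1}(1+t)(c − 1), and t·g_n = (1+t)·g_{n−1} − g_{n−2} for n ≥ 2. Then g_n = σ̄_n · (c − (1+t)(1−t^n)/(1−t^{n+1})) for all n ≥ 0, where σ̄_n = 1 + t^{-1} + ... + t^{-n}. -/
/-!
The recurrence `t gₙ = (1 + t) gₙ₋₁ − gₙ₋₂` says that the differences `gₙ₊₁ − gₙ` form a geometric
progression of ratio `t⁻¹`, so `gₙ = c + σ̄ₙ₋₁ (g₁ − c)`. The closed form then follows from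
`σ̄ₙ = 1 + t⁻¹ σ̄ₙ₋₁` and the geometric-sum identity `tⁿ (t − 1) σ̄ₙ = tⁿ⁺¹ − 1`; the denominator
`1 − tⁿ⁺¹` is nonzero because `t` is transcendental over `ℚ`.
-/

open scoped Polynomial

noncomputable section

local notation "t" => (RatFunc.X : RatFunc ℚ)

/-- `σ̄_n = 1 + t⁻¹ + ... + t⁻ⁿ` in `ℚ(t)`. -/
def sigmaBar (n : ℕ) : RatFunc ℚ := ∑ i ∈ Finset.range (n + 1), t ^ (-(i : ℤ))

open Finset

theorem eq_add_geom_sum_mul_of_sub_succ_eq_mul {R : Type*} [CommRing R] {y : R} {g : ℕ → R}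
    (h : ∀ n, g (n + 2) - g (n + 1) = y * (g (n + 1) - g n)) (n : ℕ) :
    g n = g 0 + (∑ i ∈ range n, y ^ i) * (g 1 - g 0) := by
  have hdiff : ∀ k, g (k + 1) - g k = y ^ k * (g 1 - g 0) := by
    intro k
    induction k with
    | zero => simp
    | succ k ih => rw [h, ih, pow_succ', mul_assoc]
  rw [sum_mul, ← sum_congr rfl fun k _ => hdiff k, sum_range_sub]
  ring

theorem geom_sum_inv_succ_mul_one_sub_pow {K : Type*} [Field K] {x : K} (hx : x ≠ 0) (n : ℕ) :
    (∑ i ∈ range (n + 1), x⁻¹ ^ i) * (1 - x ^ n) =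
      x⁻¹ * (∑ i ∈ range n, x⁻¹ ^ i) * (1 - x ^ (n + 1)) := by
  have hgeom := geom_sum_mul x⁻¹ n
  rw [geom_sum_succ]
  generalize ∑ i ∈ range n, x⁻¹ ^ i = S at hgeom ⊢
  rw [inv_pow] at hgeom
  field_simp at hgeom ⊢
  linear_combination -hgeom

theorem RatFunc.X_pow_ne_one {K : Type*} [Field K] {n : ℕ} (hn : n ≠ 0) :
    (RatFunc.X : RatFunc K) ^ n ≠ 1 := fun h =>
  RatFunc.transcendental_X.pow (Nat.pos_of_ne_zero hn) (h ▸ isAlgebraic_one)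

theorem sigmaBar_eq_geom_sum (n : ℕ) : sigmaBar n = ∑ i ∈ range (n + 1), t⁻¹ ^ i := by
  simp [sigmaBar, zpow_neg, inv_pow]

/-- the sequence `g` in `ℚ(t)` with `g₀ = c`,
`g₁ = t⁻¹(1+t)(c−1)` and `t·gₙ = (1+t)·gₙ₋₁ − gₙ₋₂` for `n ≥ 2` is given by
`gₙ = σ̄ₙ · (c − (1+t)(1−tⁿ)/(1−tⁿ⁺¹))`. -/
theorem stmt15 (c : RatFunc ℚ) (g : ℕ → RatFunc ℚ)
    (h0 : g 0 = c)
    (h1 : g 1 = t⁻¹ * (1 + t) * (c - 1))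
    (hrec : ∀ n : ℕ, 2 ≤ n → t * g n = (1 + t) * g (n - 1) - g (n - 2)) :
    ∀ n : ℕ, g n = sigmaBar n * (c - (1 + t) * (1 - t ^ n) / (1 - t ^ (n + 1))) := by
  have ht : t ≠ 0 := RatFunc.X_ne_zero
  have hdiff : ∀ n, g (n + 2) - g (n + 1) = t⁻¹ * (g (n + 1) - g n) := fun n => by
    have h := hrec (n + 2) le_add_self
    rw [Nat.add_sub_cancel, show n + 2 - 1 = n + 1 by omega] at h
    field_simp
    linear_combination h
  intro n
  have hden : 1 - t ^ (n + 1) ≠ 0 := sub_ne_zero.2 (RatFunc.X_pow_ne_one n.succ_ne_zero).symm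
  rw [eq_add_geom_sum_mul_of_sub_succ_eq_mul hdiff, h0, h1, sigmaBar_eq_geom_sum]
  calc _ = (∑ i ∈ range (n + 1), t⁻¹ ^ i) * c
        - (1 + t) * (t⁻¹ * (∑ i ∈ range n, t⁻¹ ^ i) * (1 - t ^ (n + 1))) / (1 - t ^ (n + 1)) := by
          rw [mul_div_assoc, mul_div_cancel_right₀ _ hden, geom_sum_succ]
          field_simp
          ring
    _ = _ := by
          rw [← geom_sum_inv_succ_mul_one_sub_pow ht]
          ring

end
end
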